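/- Let G be a finite simple graph with n = |V(G)| vertices and let K(G) = (2G) ∗ K_{2n} be the join of the disjoint union of two copies of G with a complete graph on 2n vertices. Then μ(K(G)) = α(G), where α(G) is the independence number of G. -/

import Mathlib

open SimpleGraph

variable {V : Type*}

/-- `M` is a matching in `G`: a set of pairwise vertex-disjoint edges of `G`. -/
def IsMatchingIn (G : SimpleGraph V) (M : Finset (Sym2 V)) : Prop :=
  (∀ e ∈ M, e ∈ G.edgeSet) ∧
    ∀ e ∈ M, ∀ f ∈ M, e ≠ f → ∀ v : V, v ∈ e → v ∉ f

/-- `M` is a maximal matching in `G`: a matching not properly contained in another matching. -/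
def IsMaximalMatchingIn (G : SimpleGraph V) (M : Finset (Sym2 V)) : Prop :=
  IsMatchingIn G M ∧ ∀ M', IsMatchingIn G M' → M ⊆ M' → M' = M

/-- `M` saturates (covers) the vertex `v`. -/
def Sat (M : Finset (Sym2 V)) (v : V) : Prop := ∃ e ∈ M, v ∈ e

/-- The matching number `ν(G)`. -/
noncomputable def nuNum (G : SimpleGraph V) : ℕ :=
  sSup {n | ∃ M, IsMatchingIn G M ∧ M.card = n}

/-- The minimum maximal matching number `β(G)`. -/
noncomputable def betaNum (G : SimpleGraph V) : ℕ :=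
  sInf {n | ∃ M, IsMaximalMatchingIn G M ∧ M.card = n}

/-- The matching gap `μ(G) = ν(G) - β(G)`. -/
noncomputable def muGap (G : SimpleGraph V) : ℕ := nuNum G - betaNum G

/-- `S` is an independent set in `G`. -/
def IsIndepSet (G : SimpleGraph V) (S : Set V) : Prop :=
  ∀ u ∈ S, ∀ v ∈ S, u ≠ v → ¬ G.Adj u v

/-- The independence number `α(G)`. -/
noncomputable def indepNum (G : SimpleGraph V) : ℕ :=
  sSup {n | ∃ S : Set V, _root_.IsIndepSet G S ∧ S.ncard = n}

/-- The join `G₁ ∗ G₂` of two graphs: their disjoint union together with all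
edges between the two sides. -/
def graphJoin {α β : Type*} (G₁ : SimpleGraph α) (G₂ : SimpleGraph β) :
    SimpleGraph (α ⊕ β) where
  Adj u v := (G₁ ⊕g G₂).Adj u v ∨ (u.isLeft ∧ v.isRight) ∨ (u.isRight ∧ v.isLeft)
  symm := by
    refine ⟨?_⟩
    rintro u v (h | ⟨h1, h2⟩ | ⟨h1, h2⟩)
    · exact Or.inl ((G₁ ⊕g G₂).adj_symm h)
    · exact Or.inr (Or.inr ⟨h2, h1⟩)
    · exact Or.inr (Or.inl ⟨h2, h1⟩)
  loopless := by
    refine ⟨?_⟩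
    rintro u (h | ⟨h1, h2⟩ | ⟨h1, h2⟩)
    · exact (G₁ ⊕g G₂).irrefl h
    · cases u <;> simp_all
    · cases u <;> simp_all

/-!
Write `n = |V|`, `α = α(G)` and `K = (2G) ∗ K_{2n}`, a graph on `4n` vertices. A matching `M`
leaves `4n - 2|M|` vertices unsaturated, and `M` is maximal iff the unsaturated vertices are
independent. Pairing each vertex of `2G` with its own clique vertex gives a perfect matching,
so `ν(K) = 2n`. An independent set of `K` is either a single clique vertex or contained in `2G`,
hence has size `1` or at most `2α`; by parity a maximal matching has at least `2n - α` edges.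
Conversely, for an independent set `S` of size `α`, pair the vertices of `2G` outside the two
copies of `S` with their clique vertices and match the clique vertices of the two copies of
each `v ∈ S` to each other: this is a maximal matching with `2n - α` edges. Hence
`μ(K) = 2n - (2n - α) = α`.
-/

open scoped Finset

section IndependentSets

variable {α β : Type*}

theorem indepNum_eq_simpleGraph_indepNum [Finite α] (G : SimpleGraph α) :
    _root_.indepNum G = G.indepNum := by
  unfold _root_.indepNum SimpleGraph.indepNum
  congr 1
  ext n
  constructor
  · rintro ⟨S, hS, rfl⟩
    refine ⟨S.toFinite.toFinset, ⟨?_, ?_⟩⟩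
    · rw [Set.Finite.coe_toFinset]
      -- `_root_.IsIndepSet G S` unfolds to `G.IsIndepSet S`
      exact hS
    · rw [Set.ncard_eq_toFinset_card]
  · rintro ⟨s, hs, rfl⟩
    exact ⟨s, hs, Set.ncard_coe_finset s⟩

namespace SimpleGraph

theorem indepNum_le_card [Fintype α] (G : SimpleGraph α) : G.indepNum ≤ Fintype.card α := by
  obtain ⟨s, hs⟩ := G.exists_isNIndepSet_indepNum
  exact hs.card_eq ▸ s.card_le_univ

theorem indepNum_top_le_one [Finite α] : (⊤ : SimpleGraph α).indepNum ≤ 1 := by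
  obtain ⟨s, hs⟩ := (⊤ : SimpleGraph α).exists_isNIndepSet_indepNum
  rw [← hs.card_eq, Finset.card_le_one]
  intro a ha b hb
  by_contra hab
  exact hs.isIndepSet ha hb hab hab

theorem indepNum_sum_le [Finite α] [Finite β] (G : SimpleGraph α) (H : SimpleGraph β) :
    (G ⊕g H).indepNum ≤ G.indepNum + H.indepNum := by
  obtain ⟨s, hs⟩ := (G ⊕g H).exists_isNIndepSet_indepNum
  have hleft : G.IsIndepSet (s.toLeft : Set α) := fun a ha a' ha' hne =>
    hs.isIndepSet (Finset.mem_toLeft.1 ha) (Finset.mem_toLeft.1 ha') (by simpa using hne)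
  have hright : H.IsIndepSet (s.toRight : Set β) := fun b hb b' hb' hne =>
    hs.isIndepSet (Finset.mem_toRight.1 hb) (Finset.mem_toRight.1 hb') (by simpa using hne)
  rw [← hs.card_eq, ← Finset.card_toLeft_add_card_toRight]
  exact add_le_add hleft.card_le_indepNum hright.card_le_indepNum

end SimpleGraph

end IndependentSets

section Join

variable {α β : Type*} {G₁ : SimpleGraph α} {G₂ : SimpleGraph β}

@[simp]
theorem graphJoin_adj_inl_inl {a a' : α} :
    (graphJoin G₁ G₂).Adj (.inl a) (.inl a') ↔ G₁.Adj a a' := by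
  simp [graphJoin]

@[simp]
theorem graphJoin_adj_inr_inr {b b' : β} :
    (graphJoin G₁ G₂).Adj (.inr b) (.inr b') ↔ G₂.Adj b b' := by
  simp [graphJoin]

@[simp]
theorem graphJoin_adj_inl_inr (a : α) (b : β) : (graphJoin G₁ G₂).Adj (.inl a) (.inr b) := by
  simp [graphJoin]

theorem card_le_indepNum_or_of_isIndepSet_graphJoin [Finite α] [Finite β]
    {t : Finset (α ⊕ β)} (ht : (graphJoin G₁ G₂).IsIndepSet (t : Set (α ⊕ β))) :
    #t ≤ G₁.indepNum ∨ #t ≤ G₂.indepNum := by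
  have hleft : G₁.IsIndepSet (t.toLeft : Set α) := fun a ha a' ha' hne =>
    ht (Finset.mem_toLeft.1 ha) (Finset.mem_toLeft.1 ha') (by simpa using hne) ∘
      graphJoin_adj_inl_inl.2
  have hright : G₂.IsIndepSet (t.toRight : Set β) := fun b hb b' hb' hne =>
    ht (Finset.mem_toRight.1 hb) (Finset.mem_toRight.1 hb') (by simpa using hne) ∘
      graphJoin_adj_inr_inr.2
  rw [← Finset.card_toLeft_add_card_toRight]
  by_cases hR : t.toRight = ∅
  · exact .inl (by simpa [hR] using hleft.card_le_indepNum)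
  · obtain ⟨b, hb⟩ := Finset.nonempty_iff_ne_empty.2 hR
    have hL : t.toLeft = ∅ := Finset.eq_empty_of_forall_notMem fun a ha =>
      ht (Finset.mem_toLeft.1 ha) (Finset.mem_toRight.1 hb) (by simp) (graphJoin_adj_inl_inr a b)
    exact .inr (by simpa [hL] using hright.card_le_indepNum)

end Join

section Matching

variable {W : Type*} {K : SimpleGraph W} {M : Finset (Sym2 W)}

theorem IsMatchingIn.two_mul_card_add_card_unsat [Fintype W] [DecidableEq W]
    [DecidablePred (Sat M)] (hM : IsMatchingIn K M) :
    2 * #M + #{w | ¬ Sat M w} = Fintype.card W := by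
  have hsat : ({w | Sat M w} : Finset W) = M.biUnion Sym2.toFinset := by
    ext w
    simp only [Finset.mem_filter_univ, Finset.mem_biUnion, Sym2.mem_toFinset]
    rfl
  have hcard : #(M.biUnion Sym2.toFinset) = 2 * #M := by
    rw [Finset.card_biUnion, Finset.sum_congr rfl fun e he =>
      Sym2.card_toFinset_of_not_isDiag e (K.not_isDiag_of_mem_edgeSet (hM.1 e he))]
    · simp [mul_comm]
    · intro e he f hf hef
      exact Finset.disjoint_left.2 fun v hve hvf =>
        hM.2 e he f hf hef v (Sym2.mem_toFinset.1 hve) (Sym2.mem_toFinset.1 hvf)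
  rw [← hcard, ← hsat, Finset.card_filter_add_card_filter_not, Finset.card_univ]

theorem IsMatchingIn.insert [DecidableEq W] {a b : W} (hM : IsMatchingIn K M) (hab : K.Adj a b)
    (ha : ¬ Sat M a) (hb : ¬ Sat M b) : IsMatchingIn K (insert s(a, b) M) := by
  have hfresh : ∀ f ∈ M, ∀ v ∈ s(a, b), v ∉ f := by
    rintro f hf v hv hvf
    rcases Sym2.mem_iff.1 hv with rfl | rfl
    exacts [ha ⟨f, hf, hvf⟩, hb ⟨f, hf, hvf⟩]
  refine ⟨fun e he => ?_, fun e he f hf hef v hve hvf => ?_⟩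
  · rcases Finset.mem_insert.1 he with rfl | he
    exacts [hab, hM.1 e he]
  · rcases Finset.mem_insert.1 he with rfl | he <;> rcases Finset.mem_insert.1 hf with rfl | hf
    · exact hef rfl
    · exact hfresh f hf v hve hvf
    · exact hfresh e he v hvf hve
    · exact hM.2 e he f hf hef v hve hvf

theorem isMaximalMatchingIn_iff :
    IsMaximalMatchingIn K M ↔ IsMatchingIn K M ∧ K.IsIndepSet {w | ¬ Sat M w} := by
  classical
  refine ⟨fun h => ⟨h.1, fun a ha b hb _ hab => ?_⟩,
    fun ⟨hM, hU⟩ => ⟨hM, fun M' hM' hMM' => ?_⟩⟩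
  · have hins := h.2 _ (h.1.insert hab ha hb) (Finset.subset_insert _ _)
    exact ha ⟨s(a, b), hins ▸ Finset.mem_insert_self _ _, Sym2.mem_mk_left a b⟩
  · refine (Finset.Subset.antisymm hMM' fun e he' => ?_).symm
    by_contra he
    induction e using Sym2.ind with
    | _ a b =>
      have hcovered : ∀ v ∈ s(a, b), ¬ Sat M v := fun v hv ⟨f, hf, hvf⟩ =>
        hM'.2 f (hMM' hf) _ he' (fun hfe => he (hfe ▸ hf)) v hvf hv
      exact hU (hcovered a (Sym2.mem_mk_left a b)) (hcovered b (Sym2.mem_mk_right a b))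
        (hM'.1 _ he').ne (hM'.1 _ he')

section Owner

variable {ι : Type*} [DecidableEq (Sym2 W)] {f : ι → Sym2 W} {s : Finset ι} (owner : W → ι)

theorem isMatchingIn_image_of_owner (hedge : ∀ i ∈ s, f i ∈ K.edgeSet)
    (howner : ∀ i ∈ s, ∀ v ∈ f i, owner v = i) : IsMatchingIn K (s.image f) := by
  refine ⟨?_, ?_⟩
  · simp only [Finset.mem_image]
    rintro _ ⟨i, hi, rfl⟩
    exact hedge i hi
  · simp only [Finset.mem_image]
    rintro _ ⟨i, hi, rfl⟩ _ ⟨j, hj, rfl⟩ hij v hvi hvj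
    exact hij (by rw [← howner i hi v hvi, howner j hj v hvj])

theorem card_image_of_owner (howner : ∀ i ∈ s, ∀ v ∈ f i, owner v = i) :
    #(s.image f) = #s :=
  Finset.card_image_of_injOn fun i hi j hj hij => by
    rw [← howner i hi _ (Sym2.out_fst_mem (f i)), howner j hj _ (hij ▸ Sym2.out_fst_mem (f i))]

end Owner

theorem nuNum_eq_of_forall_card_le {k : ℕ} (hle : ∀ M, IsMatchingIn K M → #M ≤ k)
    (hM : IsMatchingIn K M) (hcard : #M = k) : nuNum K = k :=
  le_antisymm
    (csSup_le ⟨_, M, hM, rfl⟩ fun _ ⟨M', hM', hk⟩ => hk ▸ hle M' hM')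
    (le_csSup ⟨k, fun _ ⟨M', hM', hk⟩ => hk ▸ hle M' hM'⟩ ⟨M, hM, hcard⟩)

theorem betaNum_eq_of_forall_le_card {k : ℕ} (hle : ∀ M, IsMaximalMatchingIn K M → k ≤ #M)
    (hM : IsMaximalMatchingIn K M) (hcard : #M = k) : betaNum K = k :=
  le_antisymm (Nat.sInf_le ⟨M, hM, hcard⟩)
    (le_csInf ⟨_, M, hM, rfl⟩ fun _ ⟨M', hM', hk⟩ => hk ▸ hle M' hM')

end Matching

section JoinMatching

variable {V B : Type*} (e : V ⊕ V ≃ B)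

def joinMatchingEdge : (V ⊕ V) ⊕ V → Sym2 ((V ⊕ V) ⊕ B)
  | .inl x => s(.inl x, .inr (e x))
  | .inr v => s(.inr (e (.inl v)), .inr (e (.inr v)))

variable [Fintype V] [DecidableEq V] (S : Finset V)

def joinMatchingIndex : Finset ((V ⊕ V) ⊕ V) := (Sᶜ.disjSum Sᶜ).disjSum S

def joinMatchingOwner : (V ⊕ V) ⊕ B → (V ⊕ V) ⊕ V
  | .inl x => .inl x
  | .inr b =>
    if Sum.elim id id (e.symm b) ∈ S then .inr (Sum.elim id id (e.symm b)) else .inl (e.symm b)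

theorem joinMatchingOwner_eq :
    ∀ i ∈ joinMatchingIndex S, ∀ w ∈ joinMatchingEdge e i, joinMatchingOwner e S w = i := by
  rintro ((x | x) | v) hi w hw <;>
    simp_all [joinMatchingIndex, joinMatchingEdge, joinMatchingOwner, Sym2.mem_iff] <;>
    rcases hw with rfl | rfl <;> simp_all

variable [DecidableEq B]

def joinMatching : Finset (Sym2 ((V ⊕ V) ⊕ B)) :=
  (joinMatchingIndex S).image (joinMatchingEdge e)

theorem isMatchingIn_joinMatching (H : SimpleGraph (V ⊕ V)) :
    IsMatchingIn (graphJoin H ⊤) (joinMatching e S) := by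
  refine isMatchingIn_image_of_owner _ (fun i _ => ?_) (joinMatchingOwner_eq e S)
  rcases i with x | v <;> simp [joinMatchingEdge]

theorem card_joinMatching : #(joinMatching e S) = 2 * Fintype.card V - #S := by
  rw [joinMatching, card_image_of_owner _ (joinMatchingOwner_eq e S), joinMatchingIndex,
    Finset.card_disjSum, Finset.card_disjSum, Finset.card_compl]
  have := S.card_le_univ
  omega

theorem exists_eq_of_not_sat_joinMatching {w : (V ⊕ V) ⊕ B} (hw : ¬ Sat (joinMatching e S) w) :
    ∃ v ∈ S, w = .inl (.inl v) ∨ w = .inl (.inr v) := by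
  by_contra! hcopy
  refine hw ⟨joinMatchingEdge e (joinMatchingOwner e S w), Finset.mem_image_of_mem _ ?_, ?_⟩
  all_goals
    rcases w with x | b
    · cases x <;> simp_all [joinMatchingOwner, joinMatchingIndex, joinMatchingEdge]
    · obtain ⟨(v | v), rfl⟩ := e.surjective b <;> by_cases hv : v ∈ S <;>
        simp [joinMatchingOwner, joinMatchingIndex, joinMatchingEdge, hv]

theorem isMaximalMatchingIn_joinMatching {G : SimpleGraph V} (hS : G.IsIndepSet (S : Set V)) :
    IsMaximalMatchingIn (graphJoin (G ⊕g G) ⊤) (joinMatching e S) := by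
  refine isMaximalMatchingIn_iff.2
    ⟨isMatchingIn_joinMatching e S _, fun a ha b hb hne hab => ?_⟩
  obtain ⟨u, hu, rfl | rfl⟩ := exists_eq_of_not_sat_joinMatching e S ha <;>
    obtain ⟨v, hv, rfl | rfl⟩ := exists_eq_of_not_sat_joinMatching e S hb <;>
    simp at hab hne <;> exact hS hu hv hne hab

end JoinMatching

section JoinWithClique

variable {V B : Type*} [Fintype V] [Fintype B]

theorem nonempty_sum_self_equiv_of_card_eq (hB : Fintype.card B = 2 * Fintype.card V) :
    Nonempty (V ⊕ V ≃ B) :=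
  ⟨Fintype.equivOfCardEq (by rw [Fintype.card_sum, hB, two_mul])⟩

theorem card_sum_self_sum_eq (hB : Fintype.card B = 2 * Fintype.card V) :
    Fintype.card ((V ⊕ V) ⊕ B) = 4 * Fintype.card V := by
  rw [Fintype.card_sum, Fintype.card_sum, hB]
  ring

theorem nuNum_graphJoin_top (hB : Fintype.card B = 2 * Fintype.card V) (H : SimpleGraph (V ⊕ V)) :
    nuNum (graphJoin H (⊤ : SimpleGraph B)) = 2 * Fintype.card V := by
  classical
  obtain ⟨e⟩ := nonempty_sum_self_equiv_of_card_eq hB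
  refine nuNum_eq_of_forall_card_le (fun M hM => ?_) (isMatchingIn_joinMatching e ∅ H)
    (by simp [card_joinMatching])
  have := hM.two_mul_card_add_card_unsat
  rw [card_sum_self_sum_eq hB] at this
  omega

theorem betaNum_graphJoin_sum_top (hB : Fintype.card B = 2 * Fintype.card V) (G : SimpleGraph V) :
    betaNum (graphJoin (G ⊕g G) (⊤ : SimpleGraph B)) = 2 * Fintype.card V - G.indepNum := by
  classical
  obtain ⟨e⟩ := nonempty_sum_self_equiv_of_card_eq hB
  obtain ⟨S, hS⟩ := G.exists_isNIndepSet_indepNum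
  refine betaNum_eq_of_forall_le_card (fun M hM => ?_)
    (isMaximalMatchingIn_joinMatching e S hS.isIndepSet) (by rw [card_joinMatching, hS.card_eq])
  have hcount := hM.1.two_mul_card_add_card_unsat
  rw [card_sum_self_sum_eq hB] at hcount
  have hunsat := (isMaximalMatchingIn_iff.1 hM).2
  rw [← Finset.coe_filter_univ] at hunsat
  have hsum := indepNum_sum_le G G
  have htop := indepNum_top_le_one (α := B)
  -- an unsaturated set of size one is excluded by parity, the graph having `4 |V|` vertices
  rcases card_le_indepNum_or_of_isIndepSet_graphJoin hunsat with h | h <;> omega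

end JoinWithClique

theorem stmt_7 {V : Type*} [Fintype V] (G : SimpleGraph V) :
    muGap (graphJoin (G ⊕g G) (⊤ : SimpleGraph (Fin (2 * Fintype.card V)))) =
      _root_.indepNum G := by
  have hB : Fintype.card (Fin (2 * Fintype.card V)) = 2 * Fintype.card V := Fintype.card_fin _
  rw [muGap, nuNum_graphJoin_top hB, betaNum_graphJoin_sum_top hB,
    indepNum_eq_simpleGraph_indepNum]
  have := indepNum_le_card G
  omega
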